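/- arXiv:hep-th/9407079 — 4 statements merged into one kernel-verified Lean document; each statement's English description precedes it below -/
import Mathlib

section
/- The double series ∑_{n≥1} ∑_{m≥1} ( ∑_{l≥0} 1/((4n+2l+3)(4n+2l+5)(4m+2l+3)(4m+2l+5)) )^2 converges, and is bounded above by π²/576 · π⁴/64 (equivalently, (64/π⁴) times the double series is at most π²/576). -/
/-!
Bounding `4x + 2l + 3` and `4x + 2l + 5` below by their values at `l = 0`, the inner sum is at most
`1 / ((4x+3)(4x+5))` times the telescoping series `∑ₗ 1/((c+2l)(c+2l+2)) = 1/(2c)` with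
`c = 4y + 3`. This gives the bound `1/(128 x² y)` for the inner sum, hence `1/(16384 x⁴ y²)` for its
square, and the double series is dominated by `ζ(4) ζ(2) / 16384 = π⁶ / 8847360`.
-/

open Filter Topology Real

lemma hasSum_sub_succ_of_antitone {f : ℕ → ℝ} (hf : Antitone f) (hf0 : Tendsto f atTop (𝓝 0)) :
    HasSum (fun n => f n - f (n + 1)) (f 0) := by
  rw [hasSum_iff_tendsto_nat_of_nonneg fun n => sub_nonneg.2 (hf n.le_succ)]
  simp_rw [Finset.sum_range_sub']
  simpa using tendsto_const_nhds.sub hf0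

lemma hasSum_one_div_mul_add_two {c : ℝ} (hc : 0 < c) :
    HasSum (fun l : ℕ => 1 / ((c + 2 * l) * (c + 2 * l + 2))) (1 / (2 * c)) := by
  set f : ℕ → ℝ := fun l => 1 / (2 * (c + 2 * l))
  have hf : Antitone f := fun i j hij => by
    have : (i : ℝ) ≤ j := by exact_mod_cast hij
    simp only [f]
    gcongr
  have hf0 : Tendsto f atTop (𝓝 0) := by
    refine tendsto_const_nhds.div_atTop
      (tendsto_atTop_add_const_left _ _ ?_ |>.const_mul_atTop two_pos)
    exact tendsto_natCast_atTop_atTop.const_mul_atTop two_pos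
  convert hasSum_sub_succ_of_antitone hf hf0 using 1
  · ext l
    have : 0 < c + 2 * l := by positivity
    simp only [f, Nat.cast_succ]
    field_simp
    ring
  · simp [f]

lemma summable_and_tsum_le_of_le_mul {α β : Type*} {f : α × β → ℝ} {g : α → ℝ} {h : β → ℝ}
    {a b : ℝ} (hf : ∀ p, 0 ≤ f p) (hg : HasSum g a) (hh : HasSum h b) (hg0 : ∀ i, 0 ≤ g i)
    (hh0 : ∀ j, 0 ≤ h j) (hle : ∀ p, f p ≤ g p.1 * h p.2) :
    Summable f ∧ ∑' p, f p ≤ a * b := by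
  have hgh : HasSum (fun p : α × β => g p.1 * h p.2) (a * b) :=
    hg.mul hh (hg.summable.mul_of_nonneg hh.summable hg0 hh0)
  have hfs : Summable f := hgh.summable.of_nonneg_of_le hf hle
  exact ⟨hfs, hgh.tsum_eq ▸ hfs.tsum_le_tsum hle hgh.summable⟩

lemma hasSum_pnat_of_hasSum {f : ℕ → ℝ} {a : ℝ} (hf : HasSum f a) (hf0 : f 0 = 0) :
    HasSum (fun n : ℕ+ => f n) a :=
  hasSum_pnat_iff.2 (by rwa [hf0, add_zero])

noncomputable def sigmaOneSummand (x y : ℝ) (l : ℕ) : ℝ :=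
  1 / ((4 * x + 2 * l + 3) * (4 * x + 2 * l + 5) * (4 * y + 2 * l + 3) * (4 * y + 2 * l + 5))

section sigmaOneSummand

variable {x y : ℝ}

lemma sigmaOneSummand_nonneg (hx : 0 ≤ x) (hy : 0 ≤ y) (l : ℕ) : 0 ≤ sigmaOneSummand x y l := by
  unfold sigmaOneSummand
  positivity

lemma sigmaOneSummand_le (hx : 0 ≤ x) (hy : 0 ≤ y) (l : ℕ) :
    sigmaOneSummand x y l ≤
      1 / ((4 * x + 3) * (4 * x + 5)) * (1 / ((4 * y + 3 + 2 * l) * (4 * y + 3 + 2 * l + 2))) := by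
  rw [sigmaOneSummand, div_mul_div_comm, one_mul]
  gcongr 1 / ?_
  calc (4 * x + 3) * (4 * x + 5) * ((4 * y + 3 + 2 * l) * (4 * y + 3 + 2 * l + 2))
      ≤ (4 * x + 2 * l + 3) * (4 * x + 2 * l + 5) *
          ((4 * y + 3 + 2 * l) * (4 * y + 3 + 2 * l + 2)) := by
        gcongr <;> linarith [(l.cast_nonneg : (0 : ℝ) ≤ l)]
    _ = _ := by ring

lemma summable_sigmaOneSummand_and_tsum_le (hx : 0 ≤ x) (hy : 0 ≤ y) :
    Summable (sigmaOneSummand x y) ∧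
      ∑' l, sigmaOneSummand x y l ≤ 1 / ((4 * x + 3) * (4 * x + 5)) * (1 / (2 * (4 * y + 3))) := by
  have hmaj := (hasSum_one_div_mul_add_two (c := 4 * y + 3) (by positivity)).mul_left
    (1 / ((4 * x + 3) * (4 * x + 5)))
  have hs : Summable (sigmaOneSummand x y) :=
    hmaj.summable.of_nonneg_of_le (sigmaOneSummand_nonneg hx hy) (sigmaOneSummand_le hx hy)
  exact ⟨hs, hmaj.tsum_eq ▸ hs.tsum_le_tsum (sigmaOneSummand_le hx hy) hmaj.summable⟩

lemma sq_tsum_sigmaOneSummand_le (hx : 0 < x) (hy : 0 < y) :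
    (∑' l, sigmaOneSummand x y l) ^ 2 ≤ 1 / 16384 * (1 / x ^ 4) * (1 / y ^ 2) := by
  have hle := (summable_sigmaOneSummand_and_tsum_le hx.le hy.le).2
  have hcrude :
      1 / ((4 * x + 3) * (4 * x + 5)) * (1 / (2 * (4 * y + 3))) ≤ 1 / (128 * x ^ 2 * y) := by
    rw [div_mul_div_comm, one_mul]
    gcongr 1 / ?_
    nlinarith [mul_pos hx hy, mul_pos (mul_pos hx hx) hy]
  calc (∑' l, sigmaOneSummand x y l) ^ 2 ≤ (1 / (128 * x ^ 2 * y)) ^ 2 := by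
        gcongr
        · exact tsum_nonneg (sigmaOneSummand_nonneg hx.le hy.le)
        · exact hle.trans hcrude
    _ = 1 / 16384 * (1 / x ^ 4) * (1 / y ^ 2) := by
        field_simp
        ring

end sigmaOneSummand

/-- Convergence of `Σ₁` with the bound
`∑_{n,m≥1} (∑_{l≥0} 1/((4n+2l+3)(4n+2l+5)(4m+2l+3)(4m+2l+5)))² ≤ (π²/576)·(π⁴/64)`. -/
theorem stmt_1 :
    Summable (fun p : ℕ+ × ℕ+ =>
      (∑' l : ℕ, (1 : ℝ) /
        ((4 * (p.1 : ℝ) + 2 * (l : ℝ) + 3) * (4 * (p.1 : ℝ) + 2 * (l : ℝ) + 5) *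
         (4 * (p.2 : ℝ) + 2 * (l : ℝ) + 3) * (4 * (p.2 : ℝ) + 2 * (l : ℝ) + 5))) ^ 2) ∧
    (∑' p : ℕ+ × ℕ+,
      (∑' l : ℕ, (1 : ℝ) /
        ((4 * (p.1 : ℝ) + 2 * (l : ℝ) + 3) * (4 * (p.1 : ℝ) + 2 * (l : ℝ) + 5) *
         (4 * (p.2 : ℝ) + 2 * (l : ℝ) + 3) * (4 * (p.2 : ℝ) + 2 * (l : ℝ) + 5))) ^ 2)
      ≤ Real.pi ^ 2 / 576 * (Real.pi ^ 4 / 64) := by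
  have hζ4 := (hasSum_pnat_of_hasSum hasSum_zeta_four (by simp)).mul_left (1 / 16384)
  have hζ2 := hasSum_pnat_of_hasSum hasSum_zeta_two (by simp)
  obtain ⟨hsum, hle⟩ := summable_and_tsum_le_of_le_mul
    (f := fun p : ℕ+ × ℕ+ => (∑' l, sigmaOneSummand p.1 p.2 l) ^ 2)
    (fun _ => sq_nonneg _) hζ4 hζ2 (fun _ => by positivity) (fun _ => by positivity)
    (fun p => sq_tsum_sigmaOneSummand_le (Nat.cast_pos.2 p.1.pos) (Nat.cast_pos.2 p.2.pos))
  refine ⟨hsum, hle.trans ?_⟩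
  ring_nf
  linarith [pow_nonneg pi_pos.le 6]
end

section
/- For all positive integers n, m one has ∑_{l=0}^{2n-2} 1/((2l+1)(2l+3)(4m+4n-2l-3)(4m+4n-2l-5)) < 6/(2n+2m-3)². -/
set_option maxHeartbeats 1000000 in
/-- For positive integers `n, m`:
`∑_{l=0}^{2n-2} 1/((2l+1)(2l+3)(4m+4n-2l-3)(4m+4n-2l-5)) < 6/(2n+2m-3)²`. -/
theorem stmt_2 (n m : ℕ) (hn : 1 ≤ n) (hm : 1 ≤ m) :
    ∑ l ∈ Finset.range (2 * n - 1),
      (1 : ℝ) / ((2 * (l : ℝ) + 1) * (2 * (l : ℝ) + 3) *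
        (4 * (m : ℝ) + 4 * (n : ℝ) - 2 * (l : ℝ) - 3) *
        (4 * (m : ℝ) + 4 * (n : ℝ) - 2 * (l : ℝ) - 5))
    < 6 / (2 * (n : ℝ) + 2 * (m : ℝ) - 3) ^ 2 := by
  have hn1 : (1:ℝ) ≤ (n:ℝ) := by exact_mod_cast hn
  have hm1 : (1:ℝ) ≤ (m:ℝ) := by exact_mod_cast hm
  set D : ℝ := 2*(n:ℝ) + 2*(m:ℝ) - 3 with hDdef
  have hD1 : 1 ≤ D := by simp only [hDdef]; linarith
  have hD0 : 0 < D := by linarith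
  have hD2 : (0:ℝ) < D^2 := by positivity
  have hcast : ((2*n-1 : ℕ) : ℝ) = 2*(n:ℝ) - 1 := by
    have h2 : 1 ≤ 2*n := by omega
    rw [Nat.cast_sub h2]; push_cast; ring
  -- telescoping functions
  set f : ℕ → ℝ := fun l => 1/(2*(2*(l:ℝ)+1)) with hf
  set g : ℕ → ℝ := fun l => 1/(2*(4*(m:ℝ)+4*(n:ℝ)-2*(l:ℝ)-3)) with hg
  -- per-term key inequality
  have key : ∀ l ∈ Finset.range (2*n-1),
      (1 : ℝ) / ((2 * (l : ℝ) + 1) * (2 * (l : ℝ) + 3) *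
        (4 * (m : ℝ) + 4 * (n : ℝ) - 2 * (l : ℝ) - 3) *
        (4 * (m : ℝ) + 4 * (n : ℝ) - 2 * (l : ℝ) - 5))
      ≤ 1/D^2 * ((f l - f (l+1)) + (g (l+1) - g l)) := by
    intro l hl
    rw [Finset.mem_range] at hl
    have hl2 : (l:ℝ) + 2 ≤ 2*(n:ℝ) := by
      have : l + 2 ≤ 2*n := by omega
      exact_mod_cast this
    set x : ℝ := 2*(l:ℝ) + 1 with hx
    set y : ℝ := 4*(m:ℝ)+4*(n:ℝ)-2*(l:ℝ)-5 with hy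
    have hx0 : 0 < x := by positivity
    have hy3 : 3 ≤ y := by simp only [hy]; linarith
    have hy0 : 0 < y := by linarith
    have ha : 0 < x * (x+2) := by positivity
    have hb : 0 < (y+2) * y := by positivity
    have hxy : x + y = 2*D + 2 := by simp only [hx, hy, hDdef]; ring
    have hab : D^2 ≤ x*(x+2) + (y+2)*y := by nlinarith [sq_nonneg (x - y)]
    have hfg1 : f l - f (l+1) = 1/(x*(x+2)) := by
      simp only [hf, hx]
      push_cast
      rw [div_sub_div _ _ (by positivity) (by positivity), div_eq_div_iff (by positivity) (by positivity)]
      ring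
    have hfg2 : g (l+1) - g l = 1/((y+2)*y) := by
      simp only [hg, hy]
      push_cast
      rw [div_sub_div _ _ (by nlinarith) (by nlinarith), div_eq_div_iff (by nlinarith) (by positivity)]
      ring
    rw [hfg1, hfg2]
    have hLHS : (2 * (l : ℝ) + 1) * (2 * (l : ℝ) + 3) *
        (4 * (m : ℝ) + 4 * (n : ℝ) - 2 * (l : ℝ) - 3) *
        (4 * (m : ℝ) + 4 * (n : ℝ) - 2 * (l : ℝ) - 5) = (x*(x+2)) * ((y+2)*y) := by
      simp only [hx, hy]; ring
    rw [hLHS]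
    have hRHS : 1/D^2 * (1/(x*(x+2)) + 1/((y+2)*y))
        = (x*(x+2) + (y+2)*y) / (D^2 * ((x*(x+2)) * ((y+2)*y))) := by
      field_simp
      ring
    rw [hRHS, div_le_div_iff₀ (by positivity) (by positivity), one_mul]
    exact mul_le_mul_of_nonneg_right hab (mul_pos ha hb).le
  have hsum := Finset.sum_le_sum key
  refine lt_of_le_of_lt hsum ?_
  rw [← Finset.mul_sum, Finset.sum_add_distrib, Finset.sum_range_sub' f (2*n-1),
    Finset.sum_range_sub g (2*n-1)]
  have hf0 : f 0 = 1/2 := by simp [hf]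
  have hfK : 0 ≤ f (2*n-1) := by
    simp only [hf]; positivity
  have hgK : g (2*n-1) ≤ 1/6 := by
    simp only [hg, hcast]
    rw [div_le_div_iff₀ (by linarith) (by norm_num)]
    linarith
  have hg0 : 0 ≤ g 0 := by
    simp only [hg, Nat.cast_zero]
    exact le_of_lt (div_pos one_pos (by linarith))
  have hsum2 : (f 0 - f (2*n-1)) + (g (2*n-1) - g 0) ≤ 2/3 := by
    rw [hf0]; linarith
  calc 1/D^2 * ((f 0 - f (2*n-1)) + (g (2*n-1) - g 0))
      ≤ 1/D^2 * (2/3) := by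
        apply mul_le_mul_of_nonneg_left hsum2 (by positivity)
    _ < 6 / D^2 := by
        rw [one_div_mul_eq_div, div_lt_div_iff₀ hD2 hD2]
        nlinarith
end

section
/- For all positive integers n, m one has ∑_{l=0}^{∞} 1/((2l+1)(2l+3)(4n+4m+2l-1)(4n+4m+2l+1)) < 1/(2n+2m-3)². -/
lemma telescope_hasSum : HasSum (fun l : ℕ => (1:ℝ) / ((2*l+1)*(2*l+3))) (1/2) := by
  have hpart : ∀ N : ℕ, ∑ l ∈ Finset.range N, (1:ℝ) / ((2*l+1)*(2*l+3))
      = 1/2 - 1/(2*(2*N+1)) := by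
    intro N
    induction N with
    | zero => norm_num
    | succ k ih =>
      rw [Finset.sum_range_succ, ih]
      have h1 : (2*(k:ℝ)+1) ≠ 0 := by positivity
      have h3 : (2*(k:ℝ)+3) ≠ 0 := by positivity
      push_cast
      field_simp
      ring
  have hnn : ∀ l : ℕ, 0 ≤ (1:ℝ) / ((2*l+1)*(2*l+3)) := by
    intro l; positivity
  rw [hasSum_iff_tendsto_nat_of_nonneg hnn]
  have : Filter.Tendsto (fun N : ℕ => (1:ℝ)/2 - 1/(2*(2*N+1))) Filter.atTop (nhds (1/2)) := by
    have h0 : Filter.Tendsto (fun N : ℕ => (1:ℝ)/(2*(2*N+1))) Filter.atTop (nhds 0) := by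
      simp only [one_div]
      apply Filter.Tendsto.comp tendsto_inv_atTop_zero
      apply Filter.tendsto_atTop_mono (fun N => by push_cast; linarith [Nat.cast_nonneg (α := ℝ) N] : ∀ N : ℕ, (N:ℝ) ≤ 2*(2*N+1))
      exact tendsto_natCast_atTop_atTop
    simpa using Filter.Tendsto.sub tendsto_const_nhds h0
  exact this.congr (fun N => (hpart N).symm)

/-- For positive integers `n, m`:
`∑_{l≥0} 1/((2l+1)(2l+3)(4n+4m+2l-1)(4n+4m+2l+1)) < 1/(2n+2m-3)²`. -/
theorem stmt_3 (n m : ℕ) (hn : 1 ≤ n) (hm : 1 ≤ m) :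
    ∑' l : ℕ, (1 : ℝ) / ((2 * (l : ℝ) + 1) * (2 * (l : ℝ) + 3) *
        (4 * (n : ℝ) + 4 * (m : ℝ) + 2 * (l : ℝ) - 1) *
        (4 * (n : ℝ) + 4 * (m : ℝ) + 2 * (l : ℝ) + 1))
    < 1 / (2 * (n : ℝ) + 2 * (m : ℝ) - 3) ^ 2 := by
  set a : ℝ := 4 * (n : ℝ) + 4 * (m : ℝ) with ha
  have hn1 : (1:ℝ) ≤ (n:ℝ) := by exact_mod_cast hn
  have hm1 : (1:ℝ) ≤ (m:ℝ) := by exact_mod_cast hm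
  have ha8 : (8:ℝ) ≤ a := by rw [ha]; linarith
  set c : ℝ := 1 / ((a - 1) * (a + 1)) with hc
  have hg : HasSum (fun l : ℕ => c * ((1:ℝ) / ((2*l+1)*(2*l+3)))) (c * (1/2)) :=
    telescope_hasSum.mul_left c
  have hbound : ∀ l : ℕ, (1 : ℝ) / ((2 * (l : ℝ) + 1) * (2 * (l : ℝ) + 3) *
        (a + 2 * (l : ℝ) - 1) * (a + 2 * (l : ℝ) + 1))
      ≤ c * ((1:ℝ) / ((2*l+1)*(2*l+3))) := by
    intro l
    have hl : (0:ℝ) ≤ (l:ℝ) := Nat.cast_nonneg l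
    have h1 : (1 : ℝ) / ((2 * (l : ℝ) + 1) * (2 * (l : ℝ) + 3) *
        (a + 2 * (l : ℝ) - 1) * (a + 2 * (l : ℝ) + 1))
        ≤ (1 : ℝ) / ((2 * (l : ℝ) + 1) * (2 * (l : ℝ) + 3) * (a - 1) * (a + 1)) := by
      apply one_div_le_one_div_of_le
      · have h1 : (0:ℝ) < (2*l+1) := by positivity
        have h2 : (0:ℝ) < (2*l+3) := by positivity
        have h3 : (0:ℝ) < a - 1 := by linarith
        have h4 : (0:ℝ) < a + 1 := by linarith
        nlinarith [mul_pos (mul_pos (mul_pos h1 h2) h3) h4]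
      · have h1 : (0:ℝ) < (2*l+1) := by positivity
        have h2 : (0:ℝ) < (2*l+3) := by positivity
        have key : (a-1)*(a+1) ≤ (a+2*(l:ℝ)-1)*(a+2*(l:ℝ)+1) := by nlinarith
        nlinarith [mul_le_mul_of_nonneg_left key (le_of_lt (mul_pos h1 h2))]
    calc (1 : ℝ) / ((2 * (l : ℝ) + 1) * (2 * (l : ℝ) + 3) *
        (a + 2 * (l : ℝ) - 1) * (a + 2 * (l : ℝ) + 1))
        ≤ (1 : ℝ) / ((2 * (l : ℝ) + 1) * (2 * (l : ℝ) + 3) * (a - 1) * (a + 1)) := h1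
      _ = c * ((1:ℝ) / ((2*l+1)*(2*l+3))) := by
          rw [hc]
          rw [div_mul_div_comm]
          ring_nf
  have hfnn : ∀ l : ℕ, 0 ≤ (1 : ℝ) / ((2 * (l : ℝ) + 1) * (2 * (l : ℝ) + 3) *
        (a + 2 * (l : ℝ) - 1) * (a + 2 * (l : ℝ) + 1)) := by
    intro l
    have hl : (0:ℝ) ≤ (l:ℝ) := Nat.cast_nonneg l
    have h1 : (0:ℝ) < a + 2*l - 1 := by linarith
    have h2 : (0:ℝ) < a + 2*l + 1 := by linarith
    positivity
  have hsum : Summable (fun l : ℕ => (1 : ℝ) / ((2 * (l : ℝ) + 1) * (2 * (l : ℝ) + 3) *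
        (a + 2 * (l : ℝ) - 1) * (a + 2 * (l : ℝ) + 1))) :=
    Summable.of_nonneg_of_le hfnn hbound hg.summable
  have hle : ∑' l : ℕ, (1 : ℝ) / ((2 * (l : ℝ) + 1) * (2 * (l : ℝ) + 3) *
        (a + 2 * (l : ℝ) - 1) * (a + 2 * (l : ℝ) + 1)) ≤ c * (1/2) := by
    rw [← hg.tsum_eq]
    exact Summable.tsum_le_tsum hbound hsum hg.summable
  have hfinal : c * (1/2) < 1 / (2 * (n : ℝ) + 2 * (m : ℝ) - 3) ^ 2 := by
    rw [hc]
    have h1 : (0:ℝ) < (a-1)*(a+1) := by nlinarith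
    have h2 : (0:ℝ) < (2 * (n : ℝ) + 2 * (m : ℝ) - 3) ^ 2 := by
      have : (1:ℝ) ≤ 2 * (n : ℝ) + 2 * (m : ℝ) - 3 := by linarith
      positivity
    rw [div_mul_eq_mul_div, one_mul, div_div, div_lt_div_iff₀ (by positivity) h2]
    have haeq : a = 4*(n:ℝ) + 4*(m:ℝ) := ha
    nlinarith [sq_nonneg ((n:ℝ) + (m:ℝ))]
  exact lt_of_le_of_lt hle hfinal
end

section
/- Let 𝒦 be a complex Hilbert space with an antiunitary involution Γ (Γ² = 1, ⟨Γf, Γg⟩ = ⟨g, f⟩), and let ψ : 𝒦 → A be a linear map into a unital C*-algebra satisfying ψ(f)* = ψ(Γf) and {ψ(f)*, ψ(g)} = ⟨f, g⟩·1. If h ∈ 𝒦 is Γ-invariant with ‖h‖ = 1, then u = √2 ψ(h) is unitary and self-adjoint, and for every f ∈ 𝒦, u ψ(f) u = ψ(Wf) where W = 2|h⟩⟨h| - 1. -/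
/-!
Since `h = Γ h`, the field `a = ψ h` is self-adjoint, so the CAR relation reads
`a ψ(f) + ψ(f) a = ⟨h, f⟩`. With `f = h` this gives `2 a² = 1`, i.e. `u = √2 a` is a
self-adjoint unitary; for general `f`, moving `a` across `ψ(f)` gives
`2 a ψ(f) a = 2⟨h, f⟩ a - ψ(f) (2 a²) = ψ(2⟨h, f⟩ h - f)`.
-/

section Algebra

variable {A : Type*} [Ring A] [Algebra ℂ A]

lemma sqrt_two_smul_mul_mul_sqrt_two_smul (a b : A) :
    (((√2 : ℝ) : ℂ) • a) * b * (((√2 : ℝ) : ℂ) • a) = (2 : ℂ) • (a * b * a) := by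
  rw [smul_mul_assoc, smul_mul_assoc, mul_smul_comm, smul_smul, ← Complex.ofReal_mul,
    Real.mul_self_sqrt zero_le_two, Complex.ofReal_ofNat]

lemma two_smul_mul_mul_of_anticomm {a b : A} {c : ℂ} (hab : a * b + b * a = c • 1)
    (ha : a * a + a * a = 1) :
    (2 : ℂ) • (a * b * a) = (2 * c) • a - b := by
  have hab' : a * b = c • 1 - b * a := eq_sub_of_add_eq hab
  have ha' : (2 : ℂ) • (a * a) = 1 := by rw [two_smul, ha]
  rw [hab', sub_mul, smul_mul_assoc, one_mul, mul_assoc, smul_sub, smul_smul,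
    ← mul_smul_comm, ha', mul_one]

end Algebra

section SelfdualCAR

variable {𝒦 A : Type*} [NormedAddCommGroup 𝒦] [InnerProductSpace ℂ 𝒦]
  [Ring A] [StarRing A] [Algebra ℂ A]
  {Γ : 𝒦 → 𝒦} {ψ : 𝒦 →ₗ[ℂ] A} {h : 𝒦}

lemma star_psi_smul_of_fixed (hΓsmul : ∀ (c : ℂ) f, Γ (c • f) = (starRingEnd ℂ c) • Γ f)
    (hstar : ∀ f, star (ψ f) = ψ (Γ f)) (hh : Γ h = h) (r : ℝ) :
    star ((r : ℂ) • ψ h) = (r : ℂ) • ψ h := by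
  rw [← map_smul, hstar, hΓsmul, hh, Complex.conj_ofReal]

lemma psi_anticomm_of_fixed (hstar : ∀ f, star (ψ f) = ψ (Γ f))
    (hCAR : ∀ f g, star (ψ f) * ψ g + ψ g * star (ψ f) = (inner ℂ f g : ℂ) • (1 : A))
    (hh : Γ h = h) (f : 𝒦) :
    ψ h * ψ f + ψ f * ψ h = (inner ℂ h f : ℂ) • (1 : A) := by
  simpa only [hstar, hh] using hCAR h f

end SelfdualCAR

theorem stmt_9_general {𝒦 A : Type*} [NormedAddCommGroup 𝒦] [InnerProductSpace ℂ 𝒦]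
    [Ring A] [StarRing A] [Algebra ℂ A]
    (Γ : 𝒦 → 𝒦)
    (hΓsmul : ∀ (c : ℂ) f, Γ (c • f) = (starRingEnd ℂ c) • Γ f)
    (ψ : 𝒦 →ₗ[ℂ] A)
    (hstar : ∀ f, star (ψ f) = ψ (Γ f))
    (hCAR : ∀ f g, star (ψ f) * ψ g + ψ g * star (ψ f) = (inner ℂ f g : ℂ) • (1 : A))
    (h : 𝒦) (hh : Γ h = h) (hnorm : ‖h‖ = 1) :
    star (((Real.sqrt 2 : ℝ) : ℂ) • ψ h) = ((Real.sqrt 2 : ℝ) : ℂ) • ψ h ∧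
    (((Real.sqrt 2 : ℝ) : ℂ) • ψ h) * (((Real.sqrt 2 : ℝ) : ℂ) • ψ h) = 1 ∧
    ∀ f : 𝒦, (((Real.sqrt 2 : ℝ) : ℂ) • ψ h) * ψ f * (((Real.sqrt 2 : ℝ) : ℂ) • ψ h)
      = ψ ((2 : ℂ) • (inner ℂ h f : ℂ) • h - f) := by
  have hanti := psi_anticomm_of_fixed hstar hCAR hh
  have hsq : ψ h * ψ h + ψ h * ψ h = 1 := by
    rw [hanti, inner_self_eq_norm_sq_to_K, hnorm]
    norm_num
  refine ⟨star_psi_smul_of_fixed hΓsmul hstar hh _, ?_, fun f => ?_⟩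
  · simpa [two_smul, hsq] using sqrt_two_smul_mul_mul_sqrt_two_smul (ψ h) 1
  · rw [sqrt_two_smul_mul_mul_sqrt_two_smul, two_smul_mul_mul_of_anticomm (hanti f) hsq,
      map_sub, map_smul, map_smul, smul_smul]

/-- In a selfdual CAR algebra: if `h` is `Γ`-invariant with `‖h‖ = 1`, then
`u = √2·ψ(h)` is unitary and self-adjoint and implements the Bogoliubov
automorphism of `W = 2|h⟩⟨h| - 1`, i.e. `u ψ(f) u = ψ(Wf)`. -/
theorem stmt_9 {𝒦 A : Type*} [NormedAddCommGroup 𝒦] [InnerProductSpace ℂ 𝒦]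
    [Ring A] [StarRing A] [Algebra ℂ A]
    (Γ : 𝒦 → 𝒦) (hΓΓ : ∀ f, Γ (Γ f) = f)
    (hΓadd : ∀ f g, Γ (f + g) = Γ f + Γ g)
    (hΓsmul : ∀ (c : ℂ) f, Γ (c • f) = (starRingEnd ℂ c) • Γ f)
    (hΓinner : ∀ f g, (inner ℂ (Γ f) (Γ g) : ℂ) = inner ℂ g f)
    (ψ : 𝒦 →ₗ[ℂ] A)
    (hstar : ∀ f, star (ψ f) = ψ (Γ f))
    (hCAR : ∀ f g, star (ψ f) * ψ g + ψ g * star (ψ f) = (inner ℂ f g : ℂ) • (1 : A))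
    (h : 𝒦) (hh : Γ h = h) (hnorm : ‖h‖ = 1) :
    star (((Real.sqrt 2 : ℝ) : ℂ) • ψ h) = ((Real.sqrt 2 : ℝ) : ℂ) • ψ h ∧
    (((Real.sqrt 2 : ℝ) : ℂ) • ψ h) * (((Real.sqrt 2 : ℝ) : ℂ) • ψ h) = 1 ∧
    ∀ f : 𝒦, (((Real.sqrt 2 : ℝ) : ℂ) • ψ h) * ψ f * (((Real.sqrt 2 : ℝ) : ℂ) • ψ h)
      = ψ ((2 : ℂ) • (inner ℂ h f : ℂ) • h - f) :=
  stmt_9_general Γ hΓsmul ψ hstar hCAR h hh hnorm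
end
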